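/- arXiv:1408.2363 — 3 statements merged into one kernel-verified Lean document; each statement's English description precedes it below -/
import Mathlib

section
/- Let E be a real normed vector space, T₀ > 0, and γ : ℝ → E a continuous function with γ(t + T₀) = γ(t) for all t. Let X : ℝ → E and s, s' ∈ ℝ be such that ‖X(t) − γ(t + s)‖ → 0 and ‖X(t) − γ(t + s')‖ → 0 as t → ∞. Then γ(s) = γ(s'). If moreover γ is injective on the interval [0, T₀), then s − s' ∈ T₀·ℤ. -/
open Filter Topology

/-- Uniqueness of the asymptotic phase: if a trajectory `X` converges to the periodic
trajectory `γ` (of period `T₀`) with both phase shifts `s` and `s'`, then `γ s = γ s'`;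
if moreover `γ` is injective on `[0, T₀)`, then `s - s'` is an integer multiple of `T₀`. -/
theorem stmt1 {E : Type*} [NormedAddCommGroup E] [NormedSpace ℝ E]
    (T₀ : ℝ) (hT₀ : 0 < T₀) (γ : ℝ → E) (hγc : Continuous γ)
    (hγp : ∀ t, γ (t + T₀) = γ t)
    (X : ℝ → E) (s s' : ℝ)
    (hs : Tendsto (fun t => ‖X t - γ (t + s)‖) atTop (𝓝 0))
    (hs' : Tendsto (fun t => ‖X t - γ (t + s')‖) atTop (𝓝 0)) :
    γ s = γ s' ∧ (Set.InjOn γ (Set.Ico 0 T₀) → ∃ k : ℤ, s - s' = T₀ * k) := by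
  have hper : Function.Periodic γ T₀ := hγp
  have hnat : ∀ (n : ℕ) (x : ℝ), γ (x + n * T₀) = γ x := by
    intro n
    induction n with
    | zero => simp
    | succ m ih =>
      intro x
      have : x + (m + 1 : ℕ) * T₀ = (x + m * T₀) + T₀ := by push_cast; ring
      rw [this, hγp, ih]
  have key : ∀ t, γ (t + s) = γ (t + s') := by
    intro t
    have hdiff : Tendsto (fun τ => ‖γ (τ + s) - γ (τ + s')‖) atTop (𝓝 0) := by
      have h := hs.add hs'
      rw [add_zero] at h
      refine squeeze_zero (fun τ => norm_nonneg _) (fun τ => ?_) h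
      have : γ (τ + s) - γ (τ + s') = (X τ - γ (τ + s')) - (X τ - γ (τ + s)) := by abel
      rw [this]
      calc ‖(X τ - γ (τ + s')) - (X τ - γ (τ + s))‖
          ≤ ‖X τ - γ (τ + s')‖ + ‖X τ - γ (τ + s)‖ := norm_sub_le _ _
        _ = ‖X τ - γ (τ + s)‖ + ‖X τ - γ (τ + s')‖ := by ring
    have hseq : Tendsto (fun n : ℕ => t + n * T₀) atTop atTop :=
      tendsto_atTop_add_const_left _ t
        (Tendsto.atTop_mul_const hT₀ tendsto_natCast_atTop_atTop)
    have h2 := hdiff.comp hseq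
    have h3 : (fun n : ℕ => ‖γ (t + n * T₀ + s) - γ (t + n * T₀ + s')‖)
        = fun _ : ℕ => ‖γ (t + s) - γ (t + s')‖ := by
      funext n
      have e1 : t + n * T₀ + s = (t + s) + n * T₀ := by ring
      have e2 : t + n * T₀ + s' = (t + s') + n * T₀ := by ring
      rw [e1, e2, hnat, hnat]
    simp only [Function.comp_def] at h2
    rw [h3] at h2
    have := tendsto_nhds_unique tendsto_const_nhds h2
    rwa [norm_sub_eq_zero_iff] at this
  constructor
  · have := key 0
    simpa using this
  · intro hinj
    have keyd : ∀ u, γ (u + (s - s')) = γ u := by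
      intro u
      have := key (u - s')
      have e1 : u - s' + s = u + (s - s') := by ring
      have e2 : u - s' + s' = u := by ring
      rwa [e1, e2] at this
    set d := s - s' with hd
    refine ⟨⌊d / T₀⌋, ?_⟩
    set r := d - ⌊d / T₀⌋ * T₀ with hr
    have hr0 : 0 ≤ r := Int.sub_floor_div_mul_nonneg d hT₀
    have hr1 : r < T₀ := Int.sub_floor_div_mul_lt d hT₀
    have hγr : γ r = γ 0 := by
      have h1 : γ r = γ d := by
        rw [hr]; exact hper.sub_int_mul_eq _
      have h2 : γ d = γ 0 := by
        have := keyd 0; simpa using this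
      rw [h1, h2]
    have : r = 0 := hinj ⟨hr0, hr1⟩ ⟨le_refl 0, hT₀⟩ hγr
    have hd0 : d = ⌊d / T₀⌋ * T₀ := by
      have := hr ▸ this
      linarith
    linarith
end

section
/- Let E be a real normed vector space, T₀ > 0, ω₀ = 2π/T₀, γ : ℝ → E continuous with γ(t + T₀) = γ(t) for all t, and X : [0,∞) → E continuous with ‖X(t) − γ(t + s)‖ → 0 as t → ∞ for some s ∈ ℝ. Let g : E → ℂ be bounded and uniformly continuous. Then lim_{T→∞} (1/T) ∫₀^T g(X(t)) e^{−i ω₀ t} dt = e^{i ω₀ s} · c₁, where c₁ = (1/T₀) ∫₀^{T₀} g(γ(t)) e^{−i ω₀ t} dt. In particular, if c₁ ≠ 0, the argument of the Fourier average of g ∘ X equals ω₀ s + arg(c₁) modulo 2π, so the Fourier average determines the asymptotic phase of the trajectory X. -/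
open Filter Topology Real MeasureTheory intervalIntegral

/-! The error `X(t) - γ(t + s)` tends to zero, so by uniform continuity of `g` the integrand
`g (X t) e^{-iω₀t}` is asymptotic to `g (γ (t + s)) e^{-iω₀t} = e^{iω₀s} · p (t + s)` with
`p t = g (γ t) e^{-iω₀t}`, and a Cesàro argument shows that asymptotic functions have the same
running averages. Since `ω₀ T₀ = 2π`, `p` is `T₀`-periodic, and the running average of a periodic
function tends to its mean over one period: the primitive minus its linear drift is periodic,
hence bounded. -/

section RunningAverage

variable {F : Type*} [NormedAddCommGroup F] [NormedSpace ℝ F]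

noncomputable def runningAverage (f : ℝ → F) (T : ℝ) : F := (1 / T) • ∫ t in (0:ℝ)..T, f t

theorem runningAverage_const_mul {𝕜 : Type*} [NormedDivisionRing 𝕜] [NormedAlgebra ℝ 𝕜]
    (c : 𝕜) (f : ℝ → 𝕜) (T : ℝ) :
    runningAverage (fun t => c * f t) T = c * runningAverage f T := by
  simp only [runningAverage, intervalIntegral.integral_const_mul, mul_smul_comm]

theorem tendsto_runningAverage_zero {φ : ℝ → F}
    (hφ : ∀ T, 0 ≤ T → IntervalIntegrable φ volume 0 T) (h : Tendsto φ atTop (𝓝 0)) :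
    Tendsto (runningAverage φ) atTop (𝓝 0) := by
  suffices (fun T => ∫ t in (0:ℝ)..T, φ t) =o[atTop] id by
    refine this.tendsto_inv_smul_nhds_zero.congr fun T => ?_
    simp only [runningAverage, id, one_div]
  refine Asymptotics.isLittleO_iff.2 fun ε hε => ?_
  obtain ⟨T₁, hT₁, hsmall⟩ : ∃ T₁, 0 ≤ T₁ ∧ ∀ t ≥ T₁, ‖φ t‖ ≤ ε / 2 := by
    obtain ⟨T₁, hT₁⟩ := ((tendsto_zero_iff_norm_tendsto_zero.1 h).eventually
      (eventually_le_nhds (half_pos hε))).exists_forall_of_atTop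
    exact ⟨max T₁ 0, le_max_right _ _, fun t ht => hT₁ t (le_of_max_le_left ht)⟩
  have hhead : (fun _ : ℝ => ∫ t in (0:ℝ)..T₁, φ t) =o[atTop] id :=
    Asymptotics.isLittleO_const_left.2 (Or.inr tendsto_norm_atTop_atTop)
  filter_upwards [Asymptotics.isLittleO_iff.1 hhead (half_pos hε), eventually_ge_atTop T₁]
    with T hhead_le hT
  have htail : ‖∫ t in T₁..T, φ t‖ ≤ ε / 2 * |T - T₁| :=
    norm_integral_le_of_norm_le_const fun t ht => hsmall t (Set.uIoc_of_le hT ▸ ht).1.le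
  have hT₀ : 0 ≤ T := hT₁.trans hT
  rw [← integral_add_adjacent_intervals (hφ T₁ hT₁)
    ((hφ T hT₀).mono_set (Set.uIcc_subset_uIcc_right (Set.mem_uIcc_of_le hT₁ hT)))]
  simp only [id, Real.norm_eq_abs] at hhead_le ⊢
  rw [abs_of_nonneg (sub_nonneg.2 hT)] at htail
  calc ‖(∫ t in (0:ℝ)..T₁, φ t) + ∫ t in T₁..T, φ t‖
      ≤ ε / 2 * |T| + ε / 2 * (T - T₁) := (norm_add_le _ _).trans (add_le_add hhead_le htail)
    _ ≤ ε * |T| := by rw [abs_of_nonneg hT₀]; nlinarith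

theorem tendsto_runningAverage_of_tendsto_sub {f q : ℝ → F} {L : F}
    (hf : ∀ T, 0 ≤ T → IntervalIntegrable f volume 0 T)
    (hq : ∀ T, 0 ≤ T → IntervalIntegrable q volume 0 T)
    (hfq : Tendsto (fun t => f t - q t) atTop (𝓝 0)) (hL : Tendsto (runningAverage q) atTop (𝓝 L)) :
    Tendsto (runningAverage f) atTop (𝓝 L) := by
  have h := (tendsto_runningAverage_zero (fun T hT => (hf T hT).sub (hq T hT)) hfq).add hL
  rw [zero_add] at h
  refine h.congr' ?_
  filter_upwards [eventually_ge_atTop 0] with T hT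
  simp only [runningAverage, integral_sub (hf T hT) (hq T hT), smul_sub, sub_add_cancel]

theorem Function.Periodic.tendsto_runningAverage {p : ℝ → F} {T₀ : ℝ}
    (hp : Function.Periodic p T₀) (hT₀ : 0 < T₀)
    (hint : ∀ a b, IntervalIntegrable p volume a b) :
    Tendsto (runningAverage p) atTop (𝓝 ((1 / T₀) • ∫ t in (0:ℝ)..T₀, p t)) := by
  set I := ∫ t in (0:ℝ)..T₀, p t
  set Q : ℝ → F := fun T => (∫ t in (0:ℝ)..T, p t) - (T / T₀) • I
  have hQp : Function.Periodic Q T₀ := fun T => by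
    simp only [Q, hp.intervalIntegral_add_eq_add 0 T hint, zero_add, add_div,
      div_self hT₀.ne', add_smul, one_smul, I]
    abel
  have hQc : Continuous Q := (continuous_primitive hint 0).sub (by fun_prop)
  obtain ⟨C, hC⟩ := (hQp.isBounded_of_continuous hT₀.ne' hQc).exists_norm_le
  have hQb : IsBoundedUnder (· ≤ ·) atTop (norm ∘ Q) :=
    isBoundedUnder_of ⟨C, fun T => hC _ (Set.mem_range_self T)⟩
  have h := (tendsto_inv_atTop_zero.zero_smul_isBoundedUnder_le hQb).const_add ((1 / T₀) • I)
  rw [add_zero] at h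
  refine h.congr' ?_
  filter_upwards [eventually_gt_atTop 0] with T hT
  simp only [runningAverage, Q, smul_sub, smul_smul, one_div]
  field_simp
  abel

end RunningAverage

theorem UniformContinuous.tendsto_dist_comp {α β ι : Type*} [PseudoMetricSpace α]
    [PseudoMetricSpace β] {g : α → β} (hg : UniformContinuous g) {l : Filter ι} {x y : ι → α}
    (h : Tendsto (fun i => dist (x i) (y i)) l (𝓝 0)) :
    Tendsto (fun i => dist (g (x i)) (g (y i))) l (𝓝 0) :=
  tendsto_uniformity_iff_dist_tendsto_zero.1
    (Tendsto.comp hg (tendsto_uniformity_iff_dist_tendsto_zero (f := fun i => (x i, y i)).2 h))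

theorem norm_exp_neg_I_mul_mul (ω t : ℝ) : ‖Complex.exp (-Complex.I * ω * t)‖ = 1 := by
  rw [show -Complex.I * ω * t = ((-(ω * t) : ℝ) : ℂ) * Complex.I by push_cast; ring]
  exact Complex.norm_exp_ofReal_mul_I _

theorem periodic_exp_neg_I_mul {ω T : ℝ} (h : ω * T = 2 * π) :
    Function.Periodic (fun t : ℝ => Complex.exp (-Complex.I * ω * t)) T := fun t => by
  have h' : (ω : ℂ) * T = 2 * π := by exact_mod_cast h
  dsimp only
  rw [show -Complex.I * ω * ((t + T : ℝ) : ℂ) = -Complex.I * ω * t - 2 * π * Complex.I by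
    push_cast; linear_combination (-Complex.I) * h']
  rw [Complex.exp_sub, Complex.exp_two_pi_mul_I, div_one]

theorem stmt6_general {E : Type*} [NormedAddCommGroup E] [NormedSpace ℝ E]
    (T₀ : ℝ) (hT₀ : 0 < T₀) (ω₀ : ℝ) (hω₀ : ω₀ = 2 * π / T₀)
    (γ : ℝ → E) (hγc : Continuous γ) (hγp : ∀ t, γ (t + T₀) = γ t)
    (X : ℝ → E) (hXc : ContinuousOn X (Set.Ici (0:ℝ))) (s : ℝ)
    (hs : Tendsto (fun t => ‖X t - γ (t + s)‖) atTop (𝓝 0))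
    (g : E → ℂ) (hgu : UniformContinuous g) :
    Tendsto (fun T : ℝ =>
        (1 / T) • ∫ t in (0:ℝ)..T, g (X t) * Complex.exp (-Complex.I * ω₀ * t))
      atTop
      (𝓝 (Complex.exp (Complex.I * ω₀ * s) *
        ((1 / T₀) • ∫ t in (0:ℝ)..T₀, g (γ t) * Complex.exp (-Complex.I * ω₀ * t)))) := by
  set e : ℝ → ℂ := fun t => Complex.exp (-Complex.I * ω₀ * t)
  set c := Complex.exp (Complex.I * ω₀ * s)
  set p : ℝ → ℂ := fun t => g (γ t) * e t
  have hpc : Continuous p := (hgu.continuous.comp hγc).mul (by fun_prop)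
  have hp : Function.Periodic p T₀ :=
    (Function.Periodic.comp hγp g).mul (periodic_exp_neg_I_mul (by rw [hω₀]; field_simp))
  have hps : Continuous fun t => p (t + s) := hpc.comp (continuous_add_const s)
  have hshift : ∀ t, c * p (t + s) = g (γ (t + s)) * e t := fun t => by
    simp only [p, e, c, mul_left_comm c, ← Complex.exp_add]
    congr 2; push_cast; ring
  have hmean : ∫ t in (0:ℝ)..T₀, p (t + s) = ∫ t in (0:ℝ)..T₀, p t := by
    rw [integral_comp_add_right, zero_add, add_comm, hp.intervalIntegral_add_eq s 0, zero_add]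
  have hlim : Tendsto (runningAverage fun t => c * p (t + s)) atTop
      (𝓝 (c * ((1 / T₀) • ∫ t in (0:ℝ)..T₀, p t))) := by
    have h := (hp.add_const s).tendsto_runningAverage hT₀
      hps.intervalIntegrable
    rw [hmean] at h
    exact (h.const_mul c).congr fun T => (runningAverage_const_mul c _ T).symm
  refine tendsto_runningAverage_of_tendsto_sub (q := fun t => c * p (t + s)) (fun T hT => ?_)
    (fun T _ => (hps.const_mul c).intervalIntegrable 0 T) ?_ hlim
  · refine ((hgu.continuous.comp_continuousOn (hXc.mono ?_)).mul (by fun_prop)).intervalIntegrable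
    simpa [Set.uIcc_of_le hT] using Set.Icc_subset_Ici_self
  · have hobs := hgu.tendsto_dist_comp (x := X) (y := fun t => γ (t + s)) (by simpa only [dist_eq_norm])
    refine tendsto_zero_iff_norm_tendsto_zero.2 (hobs.congr fun t => ?_)
    rw [hshift, dist_eq_norm, ← sub_mul, norm_mul, norm_exp_neg_I_mul_mul, mul_one]

/-- If the trajectory `X` converges to the periodic trajectory `γ` with asymptotic phase
shift `s`, then for a bounded uniformly continuous observable `g`, the Fourier average of
`g ∘ X` at the frequency `ω₀ = 2π/T₀` equals `exp (i ω₀ s) · c₁`, where `c₁` is the first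
Fourier coefficient of `g ∘ γ`. Hence the Fourier average determines the asymptotic phase. -/
theorem stmt6 {E : Type*} [NormedAddCommGroup E] [NormedSpace ℝ E]
    (T₀ : ℝ) (hT₀ : 0 < T₀) (ω₀ : ℝ) (hω₀ : ω₀ = 2 * π / T₀)
    (γ : ℝ → E) (hγc : Continuous γ) (hγp : ∀ t, γ (t + T₀) = γ t)
    (X : ℝ → E) (hXc : ContinuousOn X (Set.Ici (0:ℝ))) (s : ℝ)
    (hs : Tendsto (fun t => ‖X t - γ (t + s)‖) atTop (𝓝 0))
    (g : E → ℂ) (hgb : ∃ C : ℝ, ∀ x, ‖g x‖ ≤ C) (hgu : UniformContinuous g) :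
    Tendsto (fun T : ℝ =>
        (1 / T) • ∫ t in (0:ℝ)..T, g (X t) * Complex.exp (-Complex.I * ω₀ * t))
      atTop
      (𝓝 (Complex.exp (Complex.I * ω₀ * s) *
        ((1 / T₀) • ∫ t in (0:ℝ)..T₀, g (γ t) * Complex.exp (-Complex.I * ω₀ * t)))) :=
  stmt6_general T₀ hT₀ ω₀ hω₀ γ hγc hγp X hXc s hs g hgu
end

section
/- Let E be a real normed vector space, φ : ℝ≥0 × E → E a map satisfying the semigroup property φ(t, φ(u, x)) = φ(t + u, x) for all t, u ≥ 0 and x ∈ E, ω₀ ∈ ℝ, and g : E → ℂ. Fix x ∈ E and u ≥ 0, and assume that the map t ↦ g(φ(t, x)) is measurable and bounded on [0,∞) and that the limit A = lim_{T→∞} (1/T) ∫₀^T g(φ(t, x)) e^{−i ω₀ t} dt exists. Then the limit lim_{T→∞} (1/T) ∫₀^T g(φ(t, φ(u, x))) e^{−i ω₀ t} dt exists and equals e^{i ω₀ u} · A. -/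
open Filter Topology MeasureTheory intervalIntegral

/-!
With `h t = g (φ t x)`, the semiflow property makes `t ↦ g (φ t (φ u x))` the translate
`t ↦ h (t + u)`. Translating the character `exp (-i ω₀ t)` by `u` multiplies it by
`exp (i ω₀ u)`, and translation does not change a Cesàro average: `∫₀ᵀ f (t + u)` is
`∫₀^{T+u} f - ∫₀ᵘ f`, and `(T + u) / T → 1`.
-/

lemma intervalIntegrable_of_bounded_on_Ici {F : Type*} [NormedAddCommGroup F] {f : ℝ → F}
    (hf : AEStronglyMeasurable f (volume.restrict (Set.Ici 0))) {C : ℝ}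
    (hC : ∀ t, 0 ≤ t → ‖f t‖ ≤ C) {b : ℝ} (hb : 0 ≤ b) :
    IntervalIntegrable f volume 0 b := by
  rw [intervalIntegrable_iff_integrableOn_Ioc_of_le hb]
  refine Integrable.mono' (integrableOn_const (C := C) (by simp))
    (hf.mono_measure (Measure.restrict_mono (fun t ht => ht.1.le) le_rfl)) ?_
  filter_upwards [ae_restrict_mem measurableSet_Ioc] with t ht
  exact hC t ht.1.le

lemma tendsto_average_integral_comp_add_right {F : Type*} [NormedAddCommGroup F]
    [NormedSpace ℝ F] {f : ℝ → F} (hf : ∀ b, 0 ≤ b → IntervalIntegrable f volume 0 b)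
    {u : ℝ} (hu : 0 ≤ u) {A : F}
    (hA : Tendsto (fun T : ℝ => (1 / T) • ∫ t in (0:ℝ)..T, f t) atTop (𝓝 A)) :
    Tendsto (fun T : ℝ => (1 / T) • ∫ t in (0:ℝ)..T, f (t + u)) atTop (𝓝 A) := by
  have h_inv : Tendsto (fun T : ℝ => 1 / T) atTop (𝓝 0) :=
    tendsto_const_nhds.div_atTop tendsto_id
  have h_ratio : Tendsto (fun T : ℝ => (T + u) / T) atTop (𝓝 1) := by
    have h := (h_inv.const_mul u).const_add 1
    rw [mul_zero, add_zero] at h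
    refine h.congr' ?_
    filter_upwards [eventually_gt_atTop 0] with T hT
    field_simp
  have h_shifted :
      Tendsto (fun T : ℝ => (1 / (T + u)) • ∫ t in (0:ℝ)..T + u, f t) atTop (𝓝 A) :=
    hA.comp (tendsto_atTop_add_const_right _ u tendsto_id)
  have h_lim := (h_ratio.smul h_shifted).sub (h_inv.smul_const (∫ t in (0:ℝ)..u, f t))
  rw [one_smul, zero_smul, sub_zero] at h_lim
  refine h_lim.congr' ?_
  filter_upwards [eventually_gt_atTop 0] with T hT
  rw [integral_comp_add_right, zero_add,
    ← integral_interval_sub_left (hf _ (by positivity)) (hf u hu), smul_sub, smul_smul]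
  congr 2
  field_simp

lemma tendsto_fourierAverage_comp_add_right {h : ℝ → ℂ}
    (hh : ∀ b, 0 ≤ b → IntervalIntegrable h volume 0 b) (ω₀ : ℝ) {u : ℝ} (hu : 0 ≤ u) {A : ℂ}
    (hA : Tendsto (fun T : ℝ =>
        (1 / T) • ∫ t in (0:ℝ)..T, h t * Complex.exp (-Complex.I * ω₀ * t)) atTop (𝓝 A)) :
    Tendsto (fun T : ℝ =>
        (1 / T) • ∫ t in (0:ℝ)..T, h (t + u) * Complex.exp (-Complex.I * ω₀ * t))
      atTop (𝓝 (Complex.exp (Complex.I * ω₀ * u) * A)) := by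
  have h_char : ∀ b, 0 ≤ b →
      IntervalIntegrable (fun t : ℝ => h t * Complex.exp (-Complex.I * ω₀ * t)) volume 0 b :=
    fun b hb => (hh b hb).mul_continuousOn (by fun_prop)
  refine ((tendsto_average_integral_comp_add_right h_char hu hA).const_mul
    (Complex.exp (Complex.I * ω₀ * u))).congr fun T => ?_
  rw [mul_smul_comm, ← intervalIntegral.integral_const_mul]
  congr 2 with t
  rw [mul_left_comm, ← Complex.exp_add]
  push_cast
  ring_nf

theorem stmt7_general {E : Type*}
    (φ : ℝ → E → E)
    (hsemi : ∀ t u : ℝ, 0 ≤ t → 0 ≤ u → ∀ x : E, φ t (φ u x) = φ (t + u) x)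
    (ω₀ : ℝ) (g : E → ℂ) (x : E) (u : ℝ) (hu : 0 ≤ u)
    (hmeas : AEStronglyMeasurable (fun t : ℝ => g (φ t x))
      (volume.restrict (Set.Ici (0:ℝ))))
    (hbdd : ∃ C : ℝ, ∀ t : ℝ, 0 ≤ t → ‖g (φ t x)‖ ≤ C)
    (A : ℂ)
    (hA : Tendsto (fun T : ℝ =>
        (1 / T) • ∫ t in (0:ℝ)..T, g (φ t x) * Complex.exp (-Complex.I * ω₀ * t))
      atTop (𝓝 A)) :
    Tendsto (fun T : ℝ =>
        (1 / T) • ∫ t in (0:ℝ)..T, g (φ t (φ u x)) * Complex.exp (-Complex.I * ω₀ * t))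
      atTop (𝓝 (Complex.exp (Complex.I * ω₀ * u) * A)) := by
  obtain ⟨C, hC⟩ := hbdd
  have h_int := fun b (hb : 0 ≤ b) => intervalIntegrable_of_bounded_on_Ici hmeas hC hb
  refine (tendsto_fourierAverage_comp_add_right h_int ω₀ hu hA).congr' ?_
  filter_upwards [eventually_ge_atTop 0] with T hT
  congr 1
  refine integral_congr fun t ht => ?_
  rw [Set.uIcc_of_le hT] at ht
  simp only [hsemi t u ht.1 hu x]

/-- The Fourier average, as a function of the initial condition, is an eigenfunction of the
Koopman operator: if the Fourier average of `t ↦ g (φ t x)` at frequency `ω₀` exists and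
equals `A`, then the Fourier average of `t ↦ g (φ t (φ u x))` exists and equals
`exp (i ω₀ u) · A`. Here `φ` is a semiflow (times `t, u ≥ 0`). -/
theorem stmt7 {E : Type*} [NormedAddCommGroup E] [NormedSpace ℝ E]
    (φ : ℝ → E → E)
    (hsemi : ∀ t u : ℝ, 0 ≤ t → 0 ≤ u → ∀ x : E, φ t (φ u x) = φ (t + u) x)
    (ω₀ : ℝ) (g : E → ℂ) (x : E) (u : ℝ) (hu : 0 ≤ u)
    (hmeas : AEStronglyMeasurable (fun t : ℝ => g (φ t x))
      (volume.restrict (Set.Ici (0:ℝ))))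
    (hbdd : ∃ C : ℝ, ∀ t : ℝ, 0 ≤ t → ‖g (φ t x)‖ ≤ C)
    (A : ℂ)
    (hA : Tendsto (fun T : ℝ =>
        (1 / T) • ∫ t in (0:ℝ)..T, g (φ t x) * Complex.exp (-Complex.I * ω₀ * t))
      atTop (𝓝 A)) :
    Tendsto (fun T : ℝ =>
        (1 / T) • ∫ t in (0:ℝ)..T, g (φ t (φ u x)) * Complex.exp (-Complex.I * ω₀ * t))
      atTop (𝓝 (Complex.exp (Complex.I * ω₀ * u) * A)) :=
  stmt7_general φ hsemi ω₀ g x u hu hmeas hbdd A hA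
end
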